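/- arXiv:math/0512520 — 3 statements merged into one kernel-verified Lean document; each statement's English description precedes it below -/
import Mathlib

section
/- For every integer k with 0 ≤ k ≤ n, the quadratic polynomial Σ_{i=0}^{k} (−1)^i·x_i·x_{k−i} lies in the kernel of the Weitzenböck derivation d. -/
open MvPolynomial Finset

set_option maxHeartbeats 1000000

lemma tele_aux {R M : Type*} [CommRing R] [AddCommGroup M] [Module R M]
    (a : ℕ → M) (N : ℕ) :
    ∑ i ∈ Finset.range (N + 1), (-1 : R) ^ i • (a i + a (i + 1)) =
      a 0 + (-1 : R) ^ N • a (N + 1) := by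
  induction N with
  | zero => simp
  | succ N ih =>
    rw [Finset.sum_range_succ, ih, pow_succ]
    module


/-- The Weitzenböck derivation `d` on `k[x_0,…,x_n]`: `d(x_i) = x_{i-1}` for
`1 ≤ i ≤ n` and `d(x_0) = 0`. -/
noncomputable def weitz (k : Type*) [Field k] [CharZero k] (n : ℕ) :
    Derivation k (MvPolynomial (Fin (n + 1)) k) (MvPolynomial (Fin (n + 1)) k) :=
  mkDerivation k (fun i : Fin (n + 1) =>
    if h : (i : ℕ) = 0 then 0
    else X (⟨(i : ℕ) - 1, by have := i.isLt; omega⟩ : Fin (n + 1)))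

/-- For `0 ≤ m ≤ n`, the quadratic polynomial
`Σ_{i=0}^{m} (−1)^i x_i x_{m−i}` lies in the kernel of the Weitzenböck derivation. -/
theorem quadratic_casimir_mem_kernel (k : Type*) [Field k] [CharZero k] (n m : ℕ)
    (hm : m ≤ n) :
    weitz k n (∑ i : Fin (m + 1),
      (-1 : k) ^ (i : ℕ) •
        (X (Fin.castLE (by omega) i) * X (Fin.castLE (by omega) i.rev))) = 0 := by
  classical
  set XX : ℕ → MvPolynomial (Fin (n + 1)) k := fun j =>
    if h : j ≤ n then X (⟨j, by omega⟩ : Fin (n + 1)) else 0 with hXX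
  set a : ℕ → MvPolynomial (Fin (n + 1)) k := fun i =>
    if 1 ≤ i ∧ i ≤ m then XX (i - 1) * XX (m - i) else 0 with ha
  have hwX : ∀ (v : ℕ) (hv : v < n + 1), weitz k n (X (⟨v, hv⟩ : Fin (n + 1))) =
      if hv0 : v = 0 then 0 else X (⟨v - 1, by omega⟩ : Fin (n + 1)) := by
    intro v hv
    rw [weitz, mkDerivation_X]
  have hD : ∀ i : ℕ, i ≤ m →
      weitz k n ((-1 : k) ^ i • (XX i * XX (m - i)))
        = (-1 : k) ^ i • (a i + a (i + 1)) := by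
    intro i hi
    rw [Derivation.map_smul, Derivation.leibniz]
    have h1 : XX i = X (⟨i, by omega⟩ : Fin (n + 1)) := by
      simp only [hXX]; rw [dif_pos (by omega)]
    have h2 : XX (m - i) = X (⟨m - i, by omega⟩ : Fin (n + 1)) := by
      simp only [hXX]; rw [dif_pos (by omega)]
    rw [h1, h2, hwX _ (by omega), hwX _ (by omega)]
    congr 1
    simp only [ha, hXX]
    split_ifs <;>
      first
        | omega
        | (simp only [smul_eq_mul, smul_zero, mul_zero, zero_mul, add_zero,
            zero_add, Nat.add_sub_cancel, Nat.sub_sub, Nat.sub_zero, Nat.sub_self,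
            Nat.zero_add]
           try ring)
  have hsum : (∑ i : Fin (m + 1),
      (-1 : k) ^ (i : ℕ) •
        (X (Fin.castLE (by omega : m + 1 ≤ n + 1) i) *
          X (Fin.castLE (by omega : m + 1 ≤ n + 1) i.rev)))
      = ∑ i ∈ Finset.range (m + 1), (-1 : k) ^ i • (XX i * XX (m - i)) := by
    rw [← Fin.sum_univ_eq_sum_range
      (fun i => (-1 : k) ^ i • (XX i * XX (m - i)))]
    apply Finset.sum_congr rfl
    intro i _
    have e2 : Fin.castLE (show m + 1 ≤ n + 1 by omega) i.rev
        = (⟨m - (i : ℕ), by omega⟩ : Fin (n + 1)) := by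
      apply Fin.ext
      simp only [Fin.coe_castLE, Fin.val_rev]
      omega
    have e1 : Fin.castLE (show m + 1 ≤ n + 1 by omega) i
        = (⟨(i : ℕ), by omega⟩ : Fin (n + 1)) := by
      apply Fin.ext
      simp
    rw [e2, e1]
    simp only [hXX]
    split_ifs <;> first | rfl | omega
  rw [hsum, map_sum]
  have hc : ∀ i ∈ Finset.range (m + 1),
      weitz k n ((-1 : k) ^ i • (XX i * XX (m - i)))
        = (-1 : k) ^ i • (a i + a (i + 1)) :=
    fun i hi => hD i (by have := Finset.mem_range.mp hi; omega)
  rw [Finset.sum_congr rfl hc, tele_aux]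
  have ha0 : a 0 = 0 := by simp only [ha]; rw [if_neg (by omega)]
  have ham : a (m + 1) = 0 := by simp only [ha]; rw [if_neg (by omega)]
  rw [ha0, ham, smul_zero, add_zero]
end

section
/- Let D be the linear k-derivation of k[X] determined by D(x_i) = Σ_{j=0}^{n} λ_{ij}·x_j for a matrix (λ_{ij}) over k. If z ∈ k[X] satisfies D(z) = 0, then for every i with 0 ≤ i ≤ n one has D(∂z/∂x_i) = −Σ_{j=0}^{n} λ_{ji}·(∂z/∂x_j); that is, the partial derivatives of z transform by the negative transpose matrix, so the span of ∂z/∂x_0,…,∂z/∂x_n is a D-module dual to the span of x_0,…,x_n. -/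
open MvPolynomial Finset

lemma my_pderiv_comm {k : Type*} [CommSemiring k] {σ : Type*} (i l : σ)
    (p : MvPolynomial σ k) : pderiv i (pderiv l p) = pderiv l (pderiv i p) := by
  classical
  induction p using MvPolynomial.induction_on with
  | C a => simp
  | add p q hp hq => simp [hp, hq]
  | mul_X p j hp =>
    simp only [Derivation.leibniz, smul_eq_mul, map_add, map_mul, hp, pderiv_X, Pi.single_apply]
    split_ifs <;> simp <;> ring

lemma mkDerivation_eq_sum {k : Type*} [CommRing k] {n : ℕ}
    (f : Fin (n + 1) → MvPolynomial (Fin (n + 1)) k)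
    (p : MvPolynomial (Fin (n + 1)) k) :
    mkDerivation k f p = ∑ j, f j * pderiv j p := by
  classical
  induction p using MvPolynomial.induction_on with
  | C a => simp
  | add p q hp hq => simp [hp, hq, Finset.sum_add_distrib, mul_add]
  | mul_X p j hp =>
    have hterm : ∀ l, f l * pderiv l (p * X j)
        = f l * pderiv l p * X j + (if j = l then f l * p else 0) := by
      intro l
      rw [Derivation.leibniz]
      simp only [pderiv_X, Pi.single_apply, smul_eq_mul]
      split_ifs <;> ring_nf
    rw [Finset.sum_congr rfl fun l _ => hterm l, Finset.sum_add_distrib,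
      Finset.sum_ite_eq, if_pos (Finset.mem_univ j), ← Finset.sum_mul, ← hp,
      Derivation.leibniz, mkDerivation_X]
    simp only [smul_eq_mul]
    ring

/-- Let `D` be the linear derivation with `D(x_i) = Σ_j λ_{ij} x_j`.
If `D(z) = 0`, then the partial derivatives of `z` transform by the negative
transpose matrix: `D(∂z/∂x_i) = −Σ_j λ_{ji} ∂z/∂x_j`. -/
theorem pderiv_dual_module (k : Type*) [Field k] [CharZero k] (n : ℕ)
    (lam : Fin (n + 1) → Fin (n + 1) → k)
    (D : Derivation k (MvPolynomial (Fin (n + 1)) k) (MvPolynomial (Fin (n + 1)) k))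
    (hD : D = mkDerivation k (fun i : Fin (n + 1) => ∑ j, lam i j • X j))
    (z : MvPolynomial (Fin (n + 1)) k) (hz : D z = 0) :
    ∀ i : Fin (n + 1), D (pderiv i z) = -∑ j, lam j i • pderiv j z := by
  classical
  intro i
  subst hD
  have h0 := congrArg (⇑(pderiv i)) hz
  rw [map_zero] at h0
  rw [mkDerivation_eq_sum] at h0
  rw [map_sum] at h0
  have hterm : ∀ l : Fin (n+1),
      pderiv i ((∑ j, lam l j • X j) * pderiv l z)
        = lam l i • pderiv l z + (∑ j, lam l j • X j) * pderiv i (pderiv l z) := by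
    intro l
    rw [Derivation.leibniz]
    have : pderiv i (∑ j, lam l j • X j) = C (lam l i) := by
      simp [pderiv_X, Pi.single_apply, smul_ite, smul_eq_C_mul]
    rw [this]
    simp only [smul_eq_C_mul, smul_eq_mul]
    ring
  simp only [hterm] at h0
  rw [Finset.sum_add_distrib] at h0
  have key : ∑ l, (∑ j, lam l j • X j) * pderiv i (pderiv l z)
      = -∑ l, lam l i • pderiv l z :=
    eq_neg_of_add_eq_zero_right h0
  rw [mkDerivation_eq_sum]
  calc ∑ l, (∑ j, lam l j • X j) * pderiv l (pderiv i z)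
      = ∑ l, (∑ j, lam l j • X j) * pderiv i (pderiv l z) := by
        refine Finset.sum_congr rfl fun l _ => by rw [my_pderiv_comm]
    _ = -∑ j, lam j i • pderiv j z := key
end

section
/- Let D be the linear k-derivation of k[X] determined by D(x_i) = Σ_{j=0}^{n} λ_{ij}·x_j for a matrix (λ_{ij}) over k, and let z ∈ k[X] be a nonzero homogeneous polynomial of degree r ≥ 1 with D(z) = 0. Then r·z = Σ_{i=0}^{n} x_i·(∂z/∂x_i), where the families (x_i) and (∂z/∂x_i) satisfy D(x_i) = Σ_j λ_{ij}·x_j and D(∂z/∂x_i) = −Σ_j λ_{ji}·(∂z/∂x_j); hence every homogeneous element of the kernel of D is (1/r times) a Casimir element of D. -/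
open MvPolynomial Finset

private lemma pderiv_comm' {σ R : Type*} [CommSemiring R] [DecidableEq σ] (i j : σ)
    (p : MvPolynomial σ R) : pderiv i (pderiv j p) = pderiv j (pderiv i p) := by
  induction p using MvPolynomial.induction_on with
  | C a => simp
  | add p q hp hq => simp [hp, hq]
  | mul_X p m hp =>
      simp only [pderiv_mul, map_add, hp, pderiv_X, Pi.single_apply]
      split_ifs <;> simp <;> ring

private lemma euler_mono {σ R : Type*} [CommSemiring R] [DecidableEq σ] [Fintype σ]
    (s : σ →₀ ℕ) (a : R) (i : σ) :
    X i * pderiv i (monomial s a) = (s i) • monomial s a := by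
  rw [pderiv_monomial]
  rcases Nat.eq_zero_or_pos (s i) with h | h
  · simp [h]
  · have hs : s - Finsupp.single i 1 + Finsupp.single i 1 = s := by
      ext m
      rcases eq_or_ne m i with hm | hm
      · subst hm; simp [Finsupp.single_apply]; omega
      · simp [Finsupp.single_apply, Ne.symm hm]
    rw [X, monomial_mul, one_mul, add_comm, hs, smul_monomial, nsmul_eq_mul, mul_comm]

/-- Every nonzero homogeneous element `z` of degree `r ≥ 1` of the
kernel of a linear derivation `D` is `1/r` times a Casimir element: `r·z = Σ x_i ∂z/∂x_i`,
where `(x_i)` and `(∂z/∂x_i)` transform by `λ` and by its negative transpose,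
respectively. -/
theorem kernel_element_is_casimir (k : Type*) [Field k] [CharZero k] (n : ℕ)
    (lam : Fin (n + 1) → Fin (n + 1) → k)
    (D : Derivation k (MvPolynomial (Fin (n + 1)) k) (MvPolynomial (Fin (n + 1)) k))
    (hD : D = mkDerivation k (fun i : Fin (n + 1) => ∑ j, lam i j • X j))
    (z : MvPolynomial (Fin (n + 1)) k) (hz0 : z ≠ 0) (r : ℕ) (hr : 1 ≤ r)
    (hhom : z.IsHomogeneous r) (hz : D z = 0) :
    (r : MvPolynomial (Fin (n + 1)) k) * z = ∑ i, X i * pderiv i z ∧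
    (∀ i : Fin (n + 1), D (X i) = ∑ j, lam i j • X j) ∧
    (∀ i : Fin (n + 1), D (pderiv i z) = -∑ j, lam j i • pderiv j z) := by
  classical
  have evalsum : ∀ (f : Fin (n + 1) → Derivation k (MvPolynomial (Fin (n + 1)) k)
      (MvPolynomial (Fin (n + 1)) k)) (p : MvPolynomial (Fin (n + 1)) k),
      (∑ m, f m) p = ∑ m, f m p := by
    intro f p
    have h := map_sum (Derivation.coeFnAddMonoidHom (R := k)
      (A := MvPolynomial (Fin (n + 1)) k) (M := MvPolynomial (Fin (n + 1)) k)) f Finset.univ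
    calc (∑ m, f m) p = (⇑(∑ m, f m)) p := rfl
      _ = (∑ m, ⇑(f m)) p := congrFun h p
      _ = ∑ m, f m p := Finset.sum_apply _ _ _
  have hDX : ∀ i : Fin (n + 1), D (X i) = ∑ j, lam i j • X j := by
    intro i; rw [hD]; exact mkDerivation_X _ _ _
  -- representation of D
  have hDrep : D = ∑ m, (∑ j, lam m j • (X j : MvPolynomial (Fin (n + 1)) k)) •
      (pderiv m : Derivation k (MvPolynomial (Fin (n + 1)) k) (MvPolynomial (Fin (n + 1)) k)) := by
    apply derivation_ext
    intro i
    rw [hDX, evalsum]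
    symm
    rw [Finset.sum_eq_single i]
    · rw [Derivation.smul_apply, pderiv_X_self, smul_eq_mul, mul_one]

    · intro b _ hb
      rw [Derivation.smul_apply, pderiv_X_of_ne (Ne.symm hb), smul_zero]
    · intro h; exact absurd (Finset.mem_univ i) h
  have hDapp : ∀ p : MvPolynomial (Fin (n + 1)) k,
      D p = ∑ m, (∑ j, lam m j • (X j : MvPolynomial (Fin (n + 1)) k)) * pderiv m p := by
    intro p
    rw [hDrep, evalsum]
    simp [Derivation.smul_apply, smul_eq_mul]
  -- Euler identity
  have euler : (r : MvPolynomial (Fin (n + 1)) k) * z = ∑ i, X i * pderiv i z := by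
    conv_lhs => rw [z.as_sum]
    conv_rhs => rw [z.as_sum]
    rw [Finset.mul_sum]
    simp only [map_sum, Finset.mul_sum]
    rw [Finset.sum_comm]
    refine Finset.sum_congr rfl fun s hs => ?_
    have hdeg : (∑ i, s i) = r := by
      have h1 := hhom (mem_support_iff.mp hs)
      rw [Finsupp.weight_apply, Finsupp.sum_fintype] at h1
      · simpa using h1
      · intro; simp
    calc (r : MvPolynomial (Fin (n + 1)) k) * monomial s (coeff s z)
        = (∑ i, s i) • monomial s (coeff s z) := by rw [hdeg, nsmul_eq_mul]
      _ = ∑ i, (s i) • monomial s (coeff s z) := by rw [Finset.sum_smul]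
      _ = ∑ i, X i * pderiv i (monomial s (coeff s z)) :=
          Finset.sum_congr rfl fun i _ => (euler_mono s _ i).symm
  refine ⟨euler, hDX, fun i => ?_⟩
  have h0 : pderiv i (D z) = 0 := by rw [hz]; simp
  rw [hDapp z, map_sum] at h0
  simp only [pderiv_mul] at h0
  rw [Finset.sum_add_distrib] at h0
  have e1 : ∀ m : Fin (n + 1),
      pderiv i (∑ j, lam m j • (X j : MvPolynomial (Fin (n + 1)) k)) = C (lam m i) := by
    intro m
    rw [map_sum]
    simp only [Derivation.map_smul, pderiv_X, Pi.single_apply]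
    rw [Finset.sum_eq_single i] <;> simp +contextual [smul_eq_C_mul]
  have e2 : ∀ m : Fin (n + 1),
      (∑ j, lam m j • (X j : MvPolynomial (Fin (n + 1)) k)) * pderiv i (pderiv m z)
      = (∑ j, lam m j • (X j : MvPolynomial (Fin (n + 1)) k)) * pderiv m (pderiv i z) := by
    intro m; rw [pderiv_comm']
  have hA : (∑ m, pderiv i (∑ j, lam m j • (X j : MvPolynomial (Fin (n + 1)) k)) * pderiv m z)
      = ∑ j, lam j i • pderiv j z := by
    refine Finset.sum_congr rfl fun m _ => ?_
    rw [e1 m, ← smul_eq_C_mul]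
  have hB : (∑ m, (∑ j, lam m j • (X j : MvPolynomial (Fin (n + 1)) k)) * pderiv i (pderiv m z))
      = D (pderiv i z) := by
    rw [hDapp (pderiv i z)]
    exact Finset.sum_congr rfl fun m _ => e2 m
  rw [hA, hB] at h0
  exact eq_neg_of_add_eq_zero_right h0
end
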